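/- Let D be an arc-locally in-semicomplete digraph whose vertex set is partitioned into (V₁, V₂, V₃) with V₁ ↦ V₂, V₁ ⇒ V₃, V₂ ⇒ V₃, D[V₂] an extended odd cycle of length at least five, and D[V₃] bipartite. Then the underlying graph of D[V₂ ∪ V₃] contains no cycle of length three. -/

import Mathlib

open Set

namespace Paper

variable {V : Type*}

/-- `u` and `v` are adjacent in the underlying graph of the digraph `E`. -/
def Adj (E : V → V → Prop) (u v : V) : Prop := E u v ∨ E v u

/-- A stable set: pairwise non-adjacent vertices. -/
def Stable (E : V → V → Prop) (S : Set V) : Prop :=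
  ∀ u ∈ S, ∀ v ∈ S, u ≠ v → ¬ Adj E u v

/-- A stable set of the subdigraph induced by `W`. -/
def StableOn (E : V → V → Prop) (W S : Set V) : Prop := S ⊆ W ∧ Stable E S

/-- A maximum stable set of the subdigraph induced by `W`. -/
def MaxStableOn (E : V → V → Prop) (W S : Set V) : Prop :=
  StableOn E W S ∧ ∀ T, StableOn E W T → T.ncard ≤ S.ncard

/-- Neighborhood of `S`: vertices outside `S` adjacent to some vertex of `S`. -/
def Nbhd (E : V → V → Prop) (S : Set V) : Set V :=
  {v | v ∉ S ∧ ∃ u ∈ S, Adj E u v}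

/-- A (nonempty) directed path, as a list of vertices. -/
def IsPath (E : V → V → Prop) (p : List V) : Prop := p ≠ [] ∧ p.Chain' E

/-- A path partition of the vertex set `W` into vertex-disjoint directed paths. -/
def PathPartitionOn (E : V → V → Prop) (W : Set V) (P : List (List V)) : Prop :=
  (∀ p ∈ P, IsPath E p) ∧ P.flatten.Nodup ∧ ∀ v, v ∈ P.flatten ↔ v ∈ W

/-- `S` and `P` are orthogonal: each path contains exactly one vertex of `S`. -/
def Orthogonal (S : Set V) (P : List (List V)) : Prop :=
  ∀ p ∈ P, ∃! v, v ∈ p ∧ v ∈ S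

/-- An `S`-path partition of `W`. -/
def SPartOn (E : V → V → Prop) (W S : Set V) (P : List (List V)) : Prop :=
  PathPartitionOn E W P ∧ Orthogonal S P

/-- An `S_BE`-path partition of `W`: orthogonal and every vertex of `S` starts or
ends its path. -/
def BEPartOn (E : V → V → Prop) (W S : Set V) (P : List (List V)) : Prop :=
  SPartOn E W S P ∧ ∀ p ∈ P, ∀ v ∈ p, v ∈ S → p.head? = some v ∨ p.getLast? = some v

/-- The induced subdigraph on `W` satisfies the α-property. -/
def AlphaPropOn (E : V → V → Prop) (W : Set V) : Prop :=
  ∀ S, MaxStableOn E W S → ∃ P, SPartOn E W S P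

/-- The induced subdigraph on `W` satisfies the BE-property. -/
def BEPropOn (E : V → V → Prop) (W : Set V) : Prop :=
  ∀ S, MaxStableOn E W S → ∃ P, BEPartOn E W S P

/-- A matching (w.r.t. a symmetric-or-not adjacency `A`) whose edges go from `X`
to `Y`: pairwise vertex-disjoint edges. -/
def MatchingBetween (A : V → V → Prop) (X Y : Set V) (M : Set (V × V)) : Prop :=
  (∀ e ∈ M, e.1 ∈ X ∧ e.2 ∈ Y ∧ A e.1 e.2) ∧
  (∀ e ∈ M, ∀ f ∈ M, e ≠ f →
    e.1 ≠ f.1 ∧ e.1 ≠ f.2 ∧ e.2 ≠ f.1 ∧ e.2 ≠ f.2)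

/-- The matching `M` covers the set `X`. -/
def Covers (M : Set (V × V)) (X : Set V) : Prop :=
  ∀ x ∈ X, ∃ e ∈ M, e.1 = x ∨ e.2 = x

/-- Arc-locally in-semicomplete digraph. -/
def ArcLocallyInSemicomplete (E : V → V → Prop) : Prop :=
  ∀ u v, E u v → ∀ a b, E a u → E b v → a = b ∨ Adj E a b

/-- `A ↦ B`: every vertex of `A` dominates every vertex of `B`, and no edge from
`B` to `A`. -/
def Domin (E : V → V → Prop) (A B : Set V) : Prop :=
  (∀ a ∈ A, ∀ b ∈ B, E a b) ∧ ∀ a ∈ A, ∀ b ∈ B, ¬ E b a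

/-- `A ⇒ B`: there is no edge from `B` to `A`. -/
def NoBack (E : V → V → Prop) (A B : Set V) : Prop :=
  ∀ a ∈ A, ∀ b ∈ B, ¬ E b a

/-- The induced subdigraph on `W` has bipartite underlying graph. -/
def BipartiteOn (E : V → V → Prop) (W : Set V) : Prop :=
  ∃ A B : Set V, A ∪ B = W ∧ Disjoint A B ∧
    (∀ u ∈ A, ∀ v ∈ A, ¬ Adj E u v) ∧ (∀ u ∈ B, ∀ v ∈ B, ¬ Adj E u v)

/-- There is a directed walk of length `n` from `u` to `v`. -/
def WalkLen (E : V → V → Prop) : ℕ → V → V → Prop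
  | 0, u, v => u = v
  | n+1, u, v => ∃ w, E u w ∧ WalkLen E n w v

/-- The set of vertices at distance exactly `d` from the set `A`. -/
def Nd (E : V → V → Prop) (A : Set V) (d : ℕ) : Set V :=
  {v | (∃ u ∈ A, WalkLen E d u v) ∧ ∀ d' < d, ¬ ∃ u ∈ A, WalkLen E d' u v}

/-- Out-neighborhood of a set: vertices outside `A` dominated by some vertex of `A`. -/
def NplusSet (E : V → V → Prop) (A : Set V) : Set V :=
  {v | v ∉ A ∧ ∃ u ∈ A, E u v}

/-- The induced subdigraph on `W` is the extended cycle `Q[X 0, …, X (k-1)]`. -/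
def ExtCycleOn (E : V → V → Prop) (k : ℕ) (X : ZMod k → Set V) (W : Set V) : Prop :=
  (⋃ i, X i) = W ∧ (∀ i j, i ≠ j → Disjoint (X i) (X j)) ∧
  (∀ i, (X i).Nonempty) ∧ (∀ i, Stable E (X i)) ∧
  (∀ u ∈ W, ∀ v ∈ W, (E u v ↔ ∃ i, u ∈ X i ∧ v ∈ X (i + 1)))

/-- The partition `(V₁,V₂,V₃)` from the structure theorem for arc-locally
in-semicomplete digraphs, with `D[V₂]` an odd extended cycle of length `k ≥ 5`. -/
def StructPartition (E : V → V → Prop) (V1 V2 V3 : Set V)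
    (k : ℕ) (X : ZMod k → Set V) : Prop :=
  V1 ∪ V2 ∪ V3 = Set.univ ∧ Disjoint V1 V2 ∧ Disjoint V1 V3 ∧ Disjoint V2 V3 ∧
  Domin E V1 V2 ∧ NoBack E V1 V3 ∧ NoBack E V2 V3 ∧
  5 ≤ k ∧ Odd k ∧ ExtCycleOn E k X V2 ∧ BipartiteOn E V3

/-- `D` contains an induced blocking odd cycle. -/
def HasInducedBlockingOddCycle (E : V → V → Prop) : Prop :=
  ∃ n : ℕ, Odd n ∧ 3 ≤ n ∧ ∃ f : ZMod n → V, Function.Injective f ∧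
    (∀ i j : ZMod n, Adj E (f i) (f j) ↔ (j = i + 1 ∨ i = j + 1)) ∧
    (∀ i, ¬ E (f i) (f 0)) ∧ (∀ i, ¬ E (f 1) (f i))

/-- Stability number of the induced subdigraph on `W`. -/
noncomputable def alphaOn (E : V → V → Prop) (W : Set V) : ℕ :=
  sSup {n | ∃ S, StableOn E W S ∧ S.ncard = n}

end Paper

/-!
Two vertices of `D[V₂]` are adjacent only if their classes differ by `±1` in `ℤ/k`, and for
`k ≥ 4` a sum of two such steps is never itself a step, so `D[V₂]` has no triangle; `D[V₃]` is
bipartite. In a mixed triangle every arc between `V₂` and `V₃` points into `V₃`. Applying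
arc-local in-semicompleteness to an arc `a → c` into `V₃`, with an in-neighbour of `a` taken in
the class preceding that of `a`, yields two vertices of `V₂` whose classes differ by `2` and which
are equal or adjacent: impossible for `k ≥ 4`. When two vertices of the triangle lie in `V₃`
this is applied twice, walking back two classes along the cycle.
-/

namespace ZMod

variable {k : ℕ}

lemma natCast_ne_zero_of_lt {n : ℕ} (hn : n ≠ 0) (hnk : n < k) : (n : ZMod k) ≠ 0 := by
  rw [Ne, natCast_eq_zero_iff]
  exact fun hdvd => hn (Nat.eq_zero_of_dvd_of_lt hdvd hnk)

lemma pm_one_add_pm_one_ne_pm_one (hk : 4 ≤ k) {a b : ZMod k} (ha : a = 1 ∨ a = -1)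
    (hb : b = 1 ∨ b = -1) : ¬ (a + b = 1 ∨ a + b = -1) := by
  have h1 : (1 : ZMod k) ≠ 0 := by exact_mod_cast natCast_ne_zero_of_lt one_ne_zero (by omega)
  have h3 : (3 : ZMod k) ≠ 0 := by exact_mod_cast natCast_ne_zero_of_lt three_ne_zero (by omega)
  rcases ha with rfl | rfl <;> rcases hb with rfl | rfl <;> rintro (h | h)
  all_goals first
    | exact h1 (by linear_combination h) | exact h1 (by linear_combination -h)
    | exact h3 (by linear_combination h) | exact h3 (by linear_combination -h)

end ZMod

namespace Paper

variable {V : Type*} {E : V → V → Prop} {u v a b c : V}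

lemma Adj.symm (h : Adj E u v) : Adj E v u := Or.symm h

namespace ExtCycleOn

variable {k : ℕ} {X : ZMod k → Set V} {W : Set V} {i j : ZMod k}

lemma mem_of_mem (h : ExtCycleOn E k X W) (hu : u ∈ X i) : u ∈ W :=
  h.1 ▸ Set.mem_iUnion_of_mem i hu

lemma exists_mem (h : ExtCycleOn E k X W) (hu : u ∈ W) : ∃ i, u ∈ X i :=
  Set.mem_iUnion.mp (h.1.symm ▸ hu)

lemma index_eq (h : ExtCycleOn E k X W) (hi : u ∈ X i) (hj : u ∈ X j) : i = j := by
  by_contra hij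
  exact Set.disjoint_left.mp (h.2.1 i j hij) hi hj

lemma eq_add_one_of_edge (h : ExtCycleOn E k X W) (hu : u ∈ X i) (hv : v ∈ X j)
    (huv : E u v) : j = i + 1 := by
  obtain ⟨m, hum, hvm⟩ := (h.2.2.2.2 u (h.mem_of_mem hu) v (h.mem_of_mem hv)).mp huv
  rw [h.index_eq hv hvm, h.index_eq hu hum]

lemma exists_edge_from_pred (h : ExtCycleOn E k X W) (hu : u ∈ X i) :
    ∃ x ∈ X (i - 1), E x u := by
  obtain ⟨x, hx⟩ := h.2.2.1 (i - 1)
  refine ⟨x, hx, (h.2.2.2.2 x (h.mem_of_mem hx) u (h.mem_of_mem hu)).mpr ⟨i - 1, hx, ?_⟩⟩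
  rwa [sub_add_cancel]

lemma sub_eq_pm_one_of_adj (h : ExtCycleOn E k X W) (hu : u ∈ X i) (hv : v ∈ X j)
    (huv : Adj E u v) : j - i = 1 ∨ j - i = -1 := by
  rcases huv with huv | hvu
  · left
    rw [h.eq_add_one_of_edge hu hv huv]
    ring
  · right
    rw [h.eq_add_one_of_edge hv hu hvu]
    ring

lemma not_eq_or_adj_of_mem_add_two (h : ExtCycleOn E k X W) (hk : 4 ≤ k) (hu : u ∈ X i)
    (hv : v ∈ X (i + 2)) : ¬ (u = v ∨ Adj E u v) := by
  rintro (rfl | huv)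
  · have h2 : (2 : ZMod k) ≠ 0 := by
      exact_mod_cast ZMod.natCast_ne_zero_of_lt two_ne_zero (by omega)
    exact h2 (left_eq_add.mp (h.index_eq hu hv))
  · have hstep := h.sub_eq_pm_one_of_adj hu hv huv
    rw [add_sub_cancel_left, ← one_add_one_eq_two] at hstep
    exact ZMod.pm_one_add_pm_one_ne_pm_one hk (.inl rfl) (.inl rfl) hstep

lemma not_triangle (h : ExtCycleOn E k X W) (hk : 4 ≤ k) (ha : a ∈ W) (hb : b ∈ W)
    (hc : c ∈ W) : ¬ (Adj E a b ∧ Adj E b c ∧ Adj E a c) := by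
  rintro ⟨hab, hbc, hac⟩
  obtain ⟨i, hi⟩ := h.exists_mem ha
  obtain ⟨j, hj⟩ := h.exists_mem hb
  obtain ⟨l, hl⟩ := h.exists_mem hc
  refine ZMod.pm_one_add_pm_one_ne_pm_one hk (h.sub_eq_pm_one_of_adj hi hj hab)
    (h.sub_eq_pm_one_of_adj hj hl hbc) ?_
  rw [sub_add_sub_cancel']
  exact h.sub_eq_pm_one_of_adj hi hl hac

end ExtCycleOn

lemma BipartiteOn.not_triangle {U : Set V} (h : BipartiteOn E U) (ha : a ∈ U) (hb : b ∈ U)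
    (hc : c ∈ U) : ¬ (Adj E a b ∧ Adj E b c ∧ Adj E a c) := by
  obtain ⟨A, B, hAB, -, hA, hB⟩ := h
  have side : ∀ u ∈ U, ∀ v ∈ U, Adj E u v → (u ∈ A ↔ v ∉ A) := by
    intro u hu v hv huv
    rw [← hAB] at hu hv
    refine ⟨fun huA hvA => hA u huA v hvA huv, fun hvA => by_contra fun huA => ?_⟩
    exact hB u (hu.resolve_left huA) v (hv.resolve_left hvA) huv
  rintro ⟨hab, hbc, hac⟩
  have := side a ha b hb hab
  have := side b hb c hc hbc
  have := side a ha c hc hac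
  tauto

section CycleAndSink

variable {k : ℕ} {X : ZMod k → Set V} {W U : Set V}

lemma not_triangle_of_two_in_cycle (hALI : ArcLocallyInSemicomplete E)
    (hcyc : ExtCycleOn E k X W) (hk : 4 ≤ k) (hnb : NoBack E W U)
    (ha : a ∈ W) (hb : b ∈ W) (hc : c ∈ U) : ¬ (Adj E a b ∧ Adj E b c ∧ Adj E a c) := by
  rintro ⟨hab, hbc, hac⟩
  wlog hab' : E a b generalizing a b
  · exact this hb ha hab.symm hac hbc (hab.resolve_left hab')
  have hac' : E a c := hac.resolve_right (hnb a ha c hc)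
  have hbc' : E b c := hbc.resolve_right (hnb b hb c hc)
  obtain ⟨i, hi⟩ := hcyc.exists_mem ha
  obtain ⟨x, hx, hxa⟩ := hcyc.exists_edge_from_pred hi
  obtain ⟨j, hj⟩ := hcyc.exists_mem hb
  have hbx : b ∈ X (i - 1 + 2) := by
    rwa [hcyc.eq_add_one_of_edge hi hj hab', show i + 1 = i - 1 + 2 by ring] at hj
  exact hcyc.not_eq_or_adj_of_mem_add_two hk hx hbx (hALI a c hac' x b hxa hbc')

lemma not_triangle_of_one_in_cycle (hALI : ArcLocallyInSemicomplete E)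
    (hcyc : ExtCycleOn E k X W) (hk : 4 ≤ k) (hnb : NoBack E W U) (hWU : Disjoint W U)
    (ha : a ∈ W) (hb : b ∈ U) (hc : c ∈ U) : ¬ (Adj E a b ∧ Adj E b c ∧ Adj E a c) := by
  rintro ⟨hab, hbc, hac⟩
  wlog hbc' : E b c generalizing b c
  · exact this hc hb hac hbc.symm hab (hbc.resolve_left hbc')
  have hab' : E a b := hab.resolve_right (hnb a ha b hb)
  have hac' : E a c := hac.resolve_right (hnb a ha c hc)
  obtain ⟨i, hi⟩ := hcyc.exists_mem ha
  obtain ⟨x, hx, hxa⟩ := hcyc.exists_edge_from_pred hi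
  obtain ⟨y, hy, hyx⟩ := hcyc.exists_edge_from_pred hx
  have hxW := hcyc.mem_of_mem hx
  have hxb : E x b := by
    rcases hALI a c hac' x b hxa hbc' with rfl | hxb
    · exact absurd hb (Set.disjoint_left.mp hWU hxW)
    · exact hxb.resolve_right (hnb x hxW b hb)
  have hay : a ∈ X (i - 1 - 1 + 2) := by rwa [show i - 1 - 1 + 2 = i by ring]
  exact hcyc.not_eq_or_adj_of_mem_add_two hk hy hay (hALI x b hxb y a hyx hab')

end CycleAndSink

end Paper

open Paper in
theorem stmt12_general {V : Type*} (E : V → V → Prop)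
    (hALI : ArcLocallyInSemicomplete E) (V1 V2 V3 : Set V)
    (k : ℕ) (X : ZMod k → Set V)
    (hstruct : StructPartition E V1 V2 V3 k X) :
    ¬ ∃ a b c, a ∈ V2 ∪ V3 ∧ b ∈ V2 ∪ V3 ∧ c ∈ V2 ∪ V3 ∧
      a ≠ b ∧ b ≠ c ∧ a ≠ c ∧ Adj E a b ∧ Adj E b c ∧ Adj E a c := by
  obtain ⟨-, -, -, hd23, -, -, hnb23, hk, -, hcyc, hbip⟩ := hstruct
  have hk4 : 4 ≤ k := by omega
  rintro ⟨a, b, c, ha, hb, hc, -, -, -, hab, hbc, hac⟩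
  rcases ha with ha | ha <;> rcases hb with hb | hb <;> rcases hc with hc | hc
  · exact hcyc.not_triangle hk4 ha hb hc ⟨hab, hbc, hac⟩
  · exact not_triangle_of_two_in_cycle hALI hcyc hk4 hnb23 ha hb hc ⟨hab, hbc, hac⟩
  · exact not_triangle_of_two_in_cycle hALI hcyc hk4 hnb23 ha hc hb ⟨hac, hbc.symm, hab⟩
  · exact not_triangle_of_one_in_cycle hALI hcyc hk4 hnb23 hd23 ha hb hc ⟨hab, hbc, hac⟩
  · exact not_triangle_of_two_in_cycle hALI hcyc hk4 hnb23 hb hc ha ⟨hbc, hac.symm, hab.symm⟩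
  · exact not_triangle_of_one_in_cycle hALI hcyc hk4 hnb23 hd23 hb ha hc ⟨hab.symm, hac, hbc⟩
  · exact not_triangle_of_one_in_cycle hALI hcyc hk4 hnb23 hd23 hc ha hb
      ⟨hac.symm, hab, hbc.symm⟩
  · exact hbip.not_triangle ha hb hc ⟨hab, hbc, hac⟩

open Paper in
theorem stmt12 {V : Type*} [Fintype V] (E : V → V → Prop)
    (hALI : ArcLocallyInSemicomplete E) (V1 V2 V3 : Set V)
    (k : ℕ) (X : ZMod k → Set V)
    (hstruct : StructPartition E V1 V2 V3 k X) :
    ¬ ∃ a b c, a ∈ V2 ∪ V3 ∧ b ∈ V2 ∪ V3 ∧ c ∈ V2 ∪ V3 ∧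
      a ≠ b ∧ b ≠ c ∧ a ≠ c ∧ Adj E a b ∧ Adj E b c ∧ Adj E a c :=
  stmt12_general E hALI V1 V2 V3 k X hstruct
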